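/- arXiv:math/0608758 — 4 statements merged into one kernel-verified Lean document; each statement's English description precedes it below -/
import Mathlib

section
/- Let A(t), t ∈ [0,1], be a continuous loop (A(0) = A(1)) of real symmetric 2×2 matrices with distinct eigenvalues μ₁(t) < μ₂(t) for all t, and let φ(t) be a continuous unit eigenvector for μ₁(t). If φ(1) = −φ(0), then the loop t ↦ A(t) − (tr A(t)/2)·Id, viewed as a loop in the punctured plane of nonzero traceless symmetric 2×2 matrices, has odd (in particular nonzero) winding number around 0. -/
/-- The smaller eigenvalue of a real symmetric 2×2 matrix. -/
noncomputable def lowEig (A : Matrix (Fin 2) (Fin 2) ℝ) : ℝ :=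
  (Matrix.trace A - Real.sqrt ((Matrix.trace A) ^ 2 - 4 * A.det)) / 2

/-- If along a loop of real symmetric 2×2 matrices with distinct eigenvalues a
continuous unit eigenvector for the smaller eigenvalue reverses sign, then the loop of
traceless parts, viewed in the punctured plane via the coordinates
`(A₀₀ − tr A/2, A₀₁)`, has odd winding number around the origin: any continuous angle
lift `θ` satisfies `θ 1 − θ 0 = 2πm` with `m` odd. -/
theorem odd_winding_of_eigenvector_sign_flip
    (A : ℝ → Matrix (Fin 2) (Fin 2) ℝ)
    (hcont : ContinuousOn A (Set.Icc 0 1))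
    (hsymm : ∀ t ∈ Set.Icc (0 : ℝ) 1, (A t).IsSymm)
    (hdist : ∀ t ∈ Set.Icc (0 : ℝ) 1, (Matrix.trace (A t)) ^ 2 - 4 * (A t).det ≠ 0)
    (hloop : A 1 = A 0)
    (φ : ℝ → (Fin 2 → ℝ)) (hφ : ContinuousOn φ (Set.Icc 0 1))
    (hunit : ∀ t ∈ Set.Icc (0 : ℝ) 1, (φ t 0) ^ 2 + (φ t 1) ^ 2 = 1)
    (heig : ∀ t ∈ Set.Icc (0 : ℝ) 1, (A t).mulVec (φ t) = lowEig (A t) • φ t)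
    (hflip : φ 1 = -φ 0)
    (θ : ℝ → ℝ) (hθ : ContinuousOn θ (Set.Icc 0 1))
    (hliftx : ∀ t ∈ Set.Icc (0 : ℝ) 1,
      A t 0 0 - Matrix.trace (A t) / 2 =
        Real.sqrt ((A t 0 0 - Matrix.trace (A t) / 2) ^ 2 + (A t 0 1) ^ 2) *
          Real.cos (θ t))
    (hlifty : ∀ t ∈ Set.Icc (0 : ℝ) 1,
      A t 0 1 =
        Real.sqrt ((A t 0 0 - Matrix.trace (A t) / 2) ^ 2 + (A t 0 1) ^ 2) *
          Real.sin (θ t)) :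
    ∃ m : ℤ, Odd m ∧ θ 1 - θ 0 = 2 * Real.pi * m := by
  have h0m : (0:ℝ) ∈ Set.Icc (0:ℝ) 1 := by norm_num
  have h1m : (1:ℝ) ∈ Set.Icc (0:ℝ) 1 := by norm_num
  -- discriminant identity
  have hdisc : ∀ t ∈ Set.Icc (0:ℝ) 1, (Matrix.trace (A t)) ^ 2 - 4 * (A t).det =
      4 * ((A t 0 0 - Matrix.trace (A t) / 2) ^ 2 + (A t 0 1) ^ 2) := by
    intro t ht
    have hb : A t 1 0 = A t 0 1 := (hsymm t ht).apply 0 1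
    rw [Matrix.det_fin_two, Matrix.trace_fin_two, hb]; ring
  have hsum_pos : ∀ t ∈ Set.Icc (0:ℝ) 1,
      0 < (A t 0 0 - Matrix.trace (A t) / 2) ^ 2 + (A t 0 1) ^ 2 := by
    intro t ht
    have h := hdist t ht
    rw [hdisc t ht] at h
    have hne : (A t 0 0 - Matrix.trace (A t) / 2) ^ 2 + (A t 0 1) ^ 2 ≠ 0 := by
      intro h0; exact h (by rw [h0]; ring)
    positivity
  have hRpos : ∀ t ∈ Set.Icc (0:ℝ) 1,
      0 < Real.sqrt ((A t 0 0 - Matrix.trace (A t) / 2) ^ 2 + (A t 0 1) ^ 2) := by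
    intro t ht; exact Real.sqrt_pos.mpr (hsum_pos t ht)
  have hsqrt_disc : ∀ t ∈ Set.Icc (0:ℝ) 1,
      Real.sqrt ((Matrix.trace (A t)) ^ 2 - 4 * (A t).det) =
        2 * Real.sqrt ((A t 0 0 - Matrix.trace (A t) / 2) ^ 2 + (A t 0 1) ^ 2) := by
    intro t ht
    rw [hdisc t ht, show (4:ℝ) * ((A t 0 0 - Matrix.trace (A t) / 2) ^ 2 + (A t 0 1) ^ 2)
        = 2 ^ 2 * ((A t 0 0 - Matrix.trace (A t) / 2) ^ 2 + (A t 0 1) ^ 2) from by ring,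
      Real.sqrt_mul (by positivity), Real.sqrt_sq (by norm_num : (0:ℝ) ≤ 2)]
  -- the key pointwise identity: cos(θ/2) φ0 + sin(θ/2) φ1 = 0
  have hg : ∀ t ∈ Set.Icc (0:ℝ) 1,
      Real.cos (θ t / 2) * φ t 0 + Real.sin (θ t / 2) * φ t 1 = 0 := by
    intro t ht
    have hlow : lowEig (A t) = Matrix.trace (A t) / 2 -
        Real.sqrt ((A t 0 0 - Matrix.trace (A t) / 2) ^ 2 + (A t 0 1) ^ 2) := by
      rw [lowEig, hsqrt_disc t ht]; ring
    have h0 := congrFun (heig t ht) 0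
    have h1 := congrFun (heig t ht) 1
    simp [Matrix.mulVec, dotProduct, Fin.sum_univ_two] at h0 h1
    rw [hlow] at h0 h1
    have hb : A t 1 0 = A t 0 1 := (hsymm t ht).apply 0 1
    rw [hb] at h1
    have htr : Matrix.trace (A t) = A t 0 0 + A t 1 1 := Matrix.trace_fin_two _
    have hx := hliftx t ht
    have hy := hlifty t ht
    have hRne := (hRpos t ht).ne'
    have key1 : Real.sqrt ((A t 0 0 - Matrix.trace (A t) / 2) ^ 2 + (A t 0 1) ^ 2) *
        ((Real.cos (θ t) + 1) * φ t 0 + Real.sin (θ t) * φ t 1) = 0 := by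
      linear_combination h0 - φ t 0 * hx - φ t 1 * hy
    have key2 : Real.sqrt ((A t 0 0 - Matrix.trace (A t) / 2) ^ 2 + (A t 0 1) ^ 2) *
        (Real.sin (θ t) * φ t 0 + (1 - Real.cos (θ t)) * φ t 1) = 0 := by
      linear_combination h1 - φ t 0 * hy + φ t 1 * hx + φ t 1 * htr
    have eq1 : (Real.cos (θ t) + 1) * φ t 0 + Real.sin (θ t) * φ t 1 = 0 :=
      (mul_eq_zero.mp key1).resolve_left hRne
    have eq2 : Real.sin (θ t) * φ t 0 + (1 - Real.cos (θ t)) * φ t 1 = 0 :=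
      (mul_eq_zero.mp key2).resolve_left hRne
    have h2 : 2 * (θ t / 2) = θ t := by ring
    have hcos2 := Real.cos_two_mul (θ t / 2)
    have hsin2 := Real.sin_two_mul (θ t / 2)
    rw [h2] at hcos2 hsin2
    rw [hcos2, hsin2] at eq1 eq2
    have hpyth := Real.sin_sq_add_cos_sq (θ t / 2)
    linear_combination (Real.cos (θ t / 2) / 2) * eq1 + (Real.sin (θ t / 2) / 2) * eq2 -
      (Real.cos (θ t / 2) * φ t 0 + Real.sin (θ t / 2) * φ t 1) * hpyth -
      (- Real.sin (θ t / 2) * φ t 1) * hpyth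
  -- the sign function f
  set f : ℝ → ℝ := fun t => Real.cos (θ t / 2) * φ t 1 - Real.sin (θ t / 2) * φ t 0 with hfdef
  have hf2 : ∀ t ∈ Set.Icc (0:ℝ) 1, f t ^ 2 = 1 := by
    intro t ht
    have hg' := hg t ht
    have hpyth := Real.sin_sq_add_cos_sq (θ t / 2)
    have hu := hunit t ht
    simp only [hfdef]
    linear_combination (-(Real.cos (θ t / 2) * φ t 0 + Real.sin (θ t / 2) * φ t 1)) * hg' +
      (Real.cos (θ t / 2) ^ 2 + Real.sin (θ t / 2) ^ 2) * hu + hpyth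
  have hfcont : ContinuousOn f (Set.Icc 0 1) := by
    rw [hfdef]
    apply ContinuousOn.sub
    · exact (Real.continuous_cos.comp_continuousOn (hθ.div_const 2)).mul
        ((continuous_apply (1 : Fin 2)).comp_continuousOn hφ)
    · exact (Real.continuous_sin.comp_continuousOn (hθ.div_const 2)).mul
        ((continuous_apply (0 : Fin 2)).comp_continuousOn hφ)
  have hf0ne : f 0 ≠ 0 := by
    intro h; have := hf2 0 h0m; rw [h] at this; norm_num at this
  have hf10 : f 1 = f 0 := by
    have d : (f 1 - f 0) * (f 1 + f 0) = 0 := by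
      linear_combination (hf2 1 h1m) - (hf2 0 h0m)
    rcases mul_eq_zero.mp d with h | h
    · linarith [sub_eq_zero.mp h]
    · exfalso
      have hf1 : f 1 = -f 0 := by linarith
      rcases lt_or_gt_of_ne hf0ne with hneg | hpos
      · have h0mem : (0:ℝ) ∈ Set.Icc (f 0) (f 1) := by
          constructor <;> [linarith; linarith]
        obtain ⟨t, ht, hft⟩ := intermediate_value_Icc (by norm_num : (0:ℝ) ≤ 1) hfcont h0mem
        have := hf2 t ht; rw [hft] at this; norm_num at this
      · have h0mem : (0:ℝ) ∈ Set.Icc (f 1) (f 0) := by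
          constructor <;> [linarith; linarith]
        obtain ⟨t, ht, hft⟩ := intermediate_value_Icc' (by norm_num : (0:ℝ) ≤ 1) hfcont h0mem
        have := hf2 t ht; rw [hft] at this; norm_num at this
  -- cos θ1 = cos θ0, sin θ1 = sin θ0
  have hx1 := hliftx 1 h1m
  have hy1 := hlifty 1 h1m
  have hx0 := hliftx 0 h0m
  have hy0 := hlifty 0 h0m
  rw [hloop] at hx1 hy1
  have hRne0 := (hRpos 0 h0m).ne'
  have hcos : Real.cos (θ 1) = Real.cos (θ 0) :=
    mul_left_cancel₀ hRne0 (hx1.symm.trans hx0)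
  have hsin : Real.sin (θ 1) = Real.sin (θ 0) :=
    mul_left_cancel₀ hRne0 (hy1.symm.trans hy0)
  have hang : (θ 1 : Real.Angle) = (θ 0 : Real.Angle) := Real.Angle.cos_sin_inj hcos hsin
  obtain ⟨k, hk⟩ := Real.Angle.angle_eq_iff_two_pi_dvd_sub.mp hang
  refine ⟨k, ?_, hk⟩
  -- half-angle relations
  have hhalf : θ 1 / 2 = θ 0 / 2 + (k : ℝ) * Real.pi := by linear_combination hk / 2
  have hs : Real.sin (θ 1 / 2) = (-1) ^ k * Real.sin (θ 0 / 2) := by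
    rw [hhalf, Real.sin_add_int_mul_pi]
  have hc : Real.cos (θ 1 / 2) = (-1) ^ k * Real.cos (θ 0 / 2) := by
    rw [hhalf, Real.cos_add_int_mul_pi]
  have hφ0 : φ 1 0 = -(φ 0 0) := by rw [hflip]; simp
  have hφ1 : φ 1 1 = -(φ 0 1) := by rw [hflip]; simp
  have hfeq : f 1 = (-1 : ℝ) ^ k * (-(f 0)) := by
    simp only [hfdef]
    rw [hs, hc, hφ0, hφ1]; ring
  rcases Int.even_or_odd k with he | ho
  · exfalso
    have : ((-1 : ℝ) ^ k) = 1 := he.neg_one_zpow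
    rw [this, hf10] at hfeq
    have : f 0 = 0 := by linarith
    exact hf0ne this
  · exact ho
end

section
/- Let D ⊆ ℝ² be a closed disk and A : D → Sym₂(ℝ) a continuous family of real symmetric 2×2 matrices. Suppose that along the boundary loop ∂D, all A(a) have distinct eigenvalues and a continuous choice of unit eigenvector for the smaller eigenvalue reverses sign after one full traversal of ∂D. Then there exists a point a₀ in the interior of D at which A(a₀) has a repeated eigenvalue. -/
open Complex Set

def Dsk : Set (ℝ × ℝ) := {a : ℝ × ℝ | a.1 ^ 2 + a.2 ^ 2 ≤ 1}

lemma mem_Dsk {x : ℝ × ℝ} : x ∈ Dsk ↔ x.1 ^ 2 + x.2 ^ 2 ≤ 1 := Iff.rfl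

lemma norm_le_one_of_mem {x : ℝ × ℝ} (hx : x ∈ Dsk) : ‖x‖ ≤ 1 := by
  rw [mem_Dsk] at hx
  rw [Prod.norm_def]
  refine max_le ?_ ?_ <;> rw [Real.norm_eq_abs, abs_le] <;>
    constructor <;> nlinarith [sq_nonneg x.1, sq_nonneg x.2]

lemma disk_compact : IsCompact Dsk := by
  have hclosed : IsClosed Dsk := isClosed_le (by fun_prop) continuous_const
  refine IsCompact.of_isClosed_subset (isCompact_closedBall (0 : ℝ × ℝ) 1) hclosed ?_
  intro x hx
  simpa [Metric.mem_closedBall, dist_zero_right] using norm_le_one_of_mem hx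

lemma smul_mem_disk {r : ℝ} (h0 : 0 ≤ r) (h1 : r ≤ 1) {x : ℝ × ℝ} (hx : x ∈ Dsk) :
    r • x ∈ Dsk := by
  rw [mem_Dsk] at *
  simp only [Prod.smul_fst, Prod.smul_snd, smul_eq_mul]
  have hr2 : r ^ 2 ≤ 1 := by nlinarith
  nlinarith [mul_le_mul_of_nonneg_left hx (sq_nonneg r)]

lemma exists_sqrt_on_disk (F : ℝ × ℝ → ℂ) (hF : ContinuousOn F Dsk)
    (h0 : ∀ x ∈ Dsk, F x ≠ 0) :
    ∃ G : ℝ × ℝ → ℂ, ContinuousOn G Dsk ∧ ∀ x ∈ Dsk, G x ^ 2 = F x := by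
  -- minimum of ‖F‖ on the disk
  have hne : Dsk.Nonempty := ⟨(0, 0), by rw [mem_Dsk]; norm_num⟩
  obtain ⟨x₀, hx₀, hmin'⟩ := disk_compact.exists_isMinOn hne hF.norm
  have hmin : ∀ y ∈ Dsk, ‖F x₀‖ ≤ ‖F y‖ := fun y hy => hmin' hy
  set m : ℝ := ‖F x₀‖ with hm
  have hmpos : 0 < m := by
    rw [hm, norm_pos_iff]; exact h0 x₀ hx₀
  -- uniform continuity
  have huc := disk_compact.uniformContinuousOn_of_continuous hF
  rw [Metric.uniformContinuousOn_iff] at huc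
  obtain ⟨δ, hδ, hucδ⟩ := huc m hmpos
  obtain ⟨n, hn⟩ := exists_nat_one_div_lt hδ
  set N : ℕ := n + 1 with hN
  have hNpos : (0 : ℝ) < N := by positivity
  have hstep : (1 : ℝ) / N < δ := by exact_mod_cast hn
  -- the points along the radius
  set P : ℕ → ℝ × ℝ → ℝ × ℝ := fun k x => ((k : ℝ) / N) • x with hP
  have hPmem : ∀ k : ℕ, k ≤ N → ∀ x ∈ Dsk, P k x ∈ Dsk := by
    intro k hk x hx
    refine smul_mem_disk (by positivity) ?_ hx
    rw [div_le_one hNpos]; exact_mod_cast hk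
  -- ratio is close to 1
  have hratio : ∀ k : ℕ, k < N → ∀ x ∈ Dsk,
      F (P (k + 1) x) / F (P k x) ∈ Metric.ball (1 : ℂ) 1 := by
    intro k hk x hx
    have hk1 : P (k + 1) x ∈ Dsk := hPmem (k + 1) hk x hx
    have hk0 : P k x ∈ Dsk := hPmem k hk.le x hx
    have hda : dist (P (k + 1) x) (P k x) < δ := by
      have : P (k + 1) x - P k x = ((1 : ℝ) / N) • x := by
        rw [hP]; simp only; rw [← sub_smul]; congr 1; push_cast; ring
      rw [dist_eq_norm, this, norm_smul]
      calc ‖(1 : ℝ) / N‖ * ‖x‖ ≤ (1 / N) * 1 := by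
            refine mul_le_mul (le_of_eq ?_) (norm_le_one_of_mem hx) (norm_nonneg _) (by positivity)
            rw [Real.norm_eq_abs, abs_of_pos (by positivity)]
        _ = 1 / N := mul_one _
        _ < δ := hstep
    have hclose : ‖F (P (k + 1) x) - F (P k x)‖ < m := by
      have := hucδ _ hk1 _ hk0 hda
      rwa [dist_eq_norm] at this
    have hFk0 : F (P k x) ≠ 0 := h0 _ hk0
    rw [Metric.mem_ball, dist_eq_norm]
    have : F (P (k + 1) x) / F (P k x) - 1 = (F (P (k + 1) x) - F (P k x)) / F (P k x) := by
      field_simp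
    rw [this, norm_div]
    have hmle : m ≤ ‖F (P k x)‖ := hmin _ hk0
    calc ‖F (P (k+1) x) - F (P k x)‖ / ‖F (P k x)‖ < m / ‖F (P k x)‖ :=
          (div_lt_div_iff_of_pos_right (lt_of_lt_of_le hmpos hmle)).2 hclose
      _ ≤ 1 := by rw [div_le_one (lt_of_lt_of_le hmpos hmle)]; exact hmle
  -- the logarithm sum
  set g : ℝ × ℝ → ℂ := fun x =>
    ∑ k ∈ Finset.range N, Complex.log (F (P (k + 1) x) / F (P k x)) with hg
  have hPcont : ∀ k : ℕ, k ≤ N → ContinuousOn (fun x => F (P k x)) Dsk := by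
    intro k hk
    exact hF.comp (continuous_const_smul _).continuousOn (fun x hx => hPmem k hk x hx)
  have hgcont : ContinuousOn g Dsk := by
    apply continuousOn_finset_sum
    intro k hk
    rw [Finset.mem_range] at hk
    apply ContinuousOn.clog
    · exact (hPcont (k + 1) hk).div (hPcont k hk.le)
        (fun x hx => h0 _ (hPmem k hk.le x hx))
    · intro x hx
      exact Complex.ball_one_subset_slitPlane (hratio k hk x hx)
  -- telescoping
  have htel : ∀ x ∈ Dsk, ∀ j : ℕ, j ≤ N →
      F (P j x) = F (P 0 x) * Complex.exp (∑ k ∈ Finset.range j,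
        Complex.log (F (P (k + 1) x) / F (P k x))) := by
    intro x hx j hj
    induction j with
    | zero => simp
    | succ j ih =>
      have hjN : j < N := hj
      have hne : F (P j x) ≠ 0 := h0 _ (hPmem j hjN.le x hx)
      have hne' : F (P (j + 1) x) ≠ 0 := h0 _ (hPmem (j + 1) hj x hx)
      rw [Finset.sum_range_succ, Complex.exp_add, Complex.exp_log (div_ne_zero hne' hne),
        ← mul_assoc, ← ih hjN.le]
      field_simp
  have hP0 : ∀ x : ℝ × ℝ, P 0 x = (0 : ℝ × ℝ) := by
    intro x; rw [hP]; simp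
  have hPN : ∀ x : ℝ × ℝ, P N x = x := by
    intro x; rw [hP]; simp only
    rw [div_self (ne_of_gt hNpos), one_smul]
  have hF0 : F (0, 0) ≠ 0 := h0 _ (by rw [mem_Dsk]; norm_num)
  have hzero : ((0 : ℝ × ℝ)) = ((0 : ℝ), (0 : ℝ)) := rfl
  refine ⟨fun x => Complex.exp ((Complex.log (F (0, 0)) + g x) / 2), ?_, ?_⟩
  · exact Complex.continuous_exp.comp_continuousOn
      ((continuousOn_const.add hgcont).div_const 2)
  · intro x hx
    rw [sq, ← Complex.exp_add]
    have : (Complex.log (F (0, 0)) + g x) / 2 + (Complex.log (F (0, 0)) + g x) / 2 =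
        Complex.log (F (0, 0)) + g x := by ring
    rw [this, Complex.exp_add, Complex.exp_log hF0]
    have := htel x hx N le_rfl
    rw [hPN, hP0, hzero] at this
    exact this.symm

/-- If a continuous family of real symmetric 2×2 matrices over the closed disk has
distinct eigenvalues along the boundary circle and a continuous unit eigenvector for
the smaller eigenvalue reverses sign after one traversal of the boundary loop, then at
some interior point the matrix has a repeated eigenvalue (it is a scalar matrix). -/
theorem repeated_eigenvalue_in_disk_of_sign_flip
    (A : (ℝ × ℝ) → Matrix (Fin 2) (Fin 2) ℝ)
    (hcont : ContinuousOn A {a : ℝ × ℝ | a.1 ^ 2 + a.2 ^ 2 ≤ 1})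
    (hsymm : ∀ a : ℝ × ℝ, a.1 ^ 2 + a.2 ^ 2 ≤ 1 → (A a).IsSymm)
    (hdistb : ∀ a : ℝ × ℝ, a.1 ^ 2 + a.2 ^ 2 = 1 →
      (Matrix.trace (A a)) ^ 2 - 4 * (A a).det ≠ 0)
    (φ : ℝ → (Fin 2 → ℝ)) (hφ : Continuous φ)
    (hunit : ∀ t : ℝ, (φ t 0) ^ 2 + (φ t 1) ^ 2 = 1)
    (heig : ∀ t : ℝ,
      (A (Real.cos (2 * Real.pi * t), Real.sin (2 * Real.pi * t))).mulVec (φ t) =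
        lowEig (A (Real.cos (2 * Real.pi * t), Real.sin (2 * Real.pi * t))) • φ t)
    (hflip : φ 1 = -φ 0) :
    ∃ a : ℝ × ℝ, a.1 ^ 2 + a.2 ^ 2 < 1 ∧
      ∃ μ : ℝ, A a = μ • (1 : Matrix (Fin 2) (Fin 2) ℝ) := by
  by_contra hcon
  push_neg at hcon
  have hcontD : ContinuousOn A Dsk := hcont
  -- matrix entries are continuous on the disk
  have hent : ∀ i j : Fin 2, ContinuousOn (fun a => A a i j) Dsk := by
    intro i j
    have : ContinuousOn ((fun M : Matrix (Fin 2) (Fin 2) ℝ => M i j) ∘ A) Dsk :=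
      ((continuous_apply j).comp (continuous_apply i)).comp_continuousOn hcontD
    exact this
  -- symmetry of off-diagonal entries
  have hsy : ∀ a ∈ Dsk, A a 1 0 = A a 0 1 := fun a ha => (hsymm a ha).apply 0 1
  -- discriminant identity
  have hdisc : ∀ a ∈ Dsk, (Matrix.trace (A a)) ^ 2 - 4 * (A a).det =
      (A a 0 0 - A a 1 1) ^ 2 + 4 * (A a 0 1) ^ 2 := by
    intro a ha
    rw [Matrix.trace_fin_two, Matrix.det_fin_two, hsy a ha]
    ring
  -- the nonvanishing complex field
  set F : ℝ × ℝ → ℂ := fun a =>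
    ((A a 0 0 - A a 1 1 : ℝ) : ℂ) + ((2 * A a 0 1 : ℝ) : ℂ) * Complex.I with hFdef
  have hFre : ∀ a, (F a).re = A a 0 0 - A a 1 1 := by intro a; simp [hFdef]
  have hFim : ∀ a, (F a).im = 2 * A a 0 1 := by intro a; simp [hFdef]
  have hFcont : ContinuousOn F Dsk := by
    apply ContinuousOn.add
    · exact Complex.continuous_ofReal.comp_continuousOn ((hent 0 0).sub (hent 1 1))
    · exact (Complex.continuous_ofReal.comp_continuousOn
        (continuousOn_const.mul (hent 0 1))).mul continuousOn_const
  have hF0 : ∀ a ∈ Dsk, F a ≠ 0 := by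
    intro a ha hz
    have h1 : A a 0 0 - A a 1 1 = 0 := by rw [← hFre a, hz]; simp
    have h2 : A a 0 1 = 0 := by
      have := hFim a; rw [hz] at this; simp at this
      linarith [this.symm]
    rcases lt_or_eq_of_le (show a.1 ^ 2 + a.2 ^ 2 ≤ 1 from ha) with hlt | heq
    · refine hcon a hlt (A a 0 0) ?_
      ext i j
      fin_cases i <;> fin_cases j <;>
        simp [Matrix.smul_apply, Matrix.one_apply, hsy a ha, h2] <;> linarith
    · exact hdistb a heq (by rw [hdisc a ha, h1, h2]; ring)
  obtain ⟨G, hGcont, hGsq⟩ := exists_sqrt_on_disk F hFcont hF0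
  -- the boundary circle
  set c : ℝ → ℝ × ℝ := fun t => (Real.cos (2 * Real.pi * t), Real.sin (2 * Real.pi * t))
    with hcdef
  have hcc : Continuous c := by
    refine Continuous.prodMk ?_ ?_
    · exact Real.continuous_cos.comp (continuous_const.mul continuous_id)
    · exact Real.continuous_sin.comp (continuous_const.mul continuous_id)
  have hcb : ∀ t, (c t).1 ^ 2 + (c t).2 ^ 2 = 1 := by
    intro t; simp only [hcdef]; exact Real.cos_sq_add_sin_sq _
  have hcD : ∀ t, c t ∈ Dsk := fun t => le_of_eq (hcb t)
  -- the positive gap along the boundary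
  set st : ℝ → ℝ := fun t =>
    Real.sqrt ((Matrix.trace (A (c t))) ^ 2 - 4 * (A (c t)).det) with hstdef
  have hstpos : ∀ t, 0 < st t := by
    intro t
    apply Real.sqrt_pos.2
    have h1 : 0 ≤ (Matrix.trace (A (c t))) ^ 2 - 4 * (A (c t)).det := by
      rw [hdisc (c t) (hcD t)]; positivity
    exact lt_of_le_of_ne h1 (Ne.symm (hdistb (c t) (hcb t)))
  have hstsq : ∀ t, st t ^ 2 = (Matrix.trace (A (c t))) ^ 2 - 4 * (A (c t)).det := by
    intro t
    rw [hstdef]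
    apply Real.sq_sqrt
    rw [hdisc (c t) (hcD t)]; positivity
  have hstcont : Continuous st := by
    rw [hstdef]
    apply Real.continuous_sqrt.comp
    have hAc : Continuous fun t => A (c t) := hcontD.comp_continuous hcc hcD
    have he : ∀ i j : Fin 2, Continuous fun t => A (c t) i j := fun i j =>
      (continuous_apply j).comp ((continuous_apply i).comp hAc)
    have htr : (fun t => (Matrix.trace (A (c t))) ^ 2 - 4 * (A (c t)).det) =
        fun t => (A (c t) 0 0 + A (c t) 1 1) ^ 2 -
          4 * (A (c t) 0 0 * A (c t) 1 1 - A (c t) 0 1 * A (c t) 1 0) := by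
      funext t; rw [Matrix.trace_fin_two, Matrix.det_fin_two]
    rw [htr]
    exact (((he 0 0).add (he 1 1)).pow 2).sub (continuous_const.mul
      (((he 0 0).mul (he 1 1)).sub ((he 0 1).mul (he 1 0))))
  -- the eigenvector as a complex number
  set ψ : ℝ → ℂ := fun t => ((φ t 0 : ℝ) : ℂ) + ((φ t 1 : ℝ) : ℂ) * Complex.I with hψdef
  have hψcont : Continuous ψ := by
    apply Continuous.add
    · exact Complex.continuous_ofReal.comp ((continuous_apply 0).comp hφ)
    · exact (Complex.continuous_ofReal.comp ((continuous_apply 1).comp hφ)).mul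
        continuous_const
  have hψne : ∀ t, ψ t ≠ 0 := by
    intro t hz
    rw [hψdef] at hz
    simp only [Complex.ext_iff, Complex.add_re, Complex.ofReal_re, Complex.mul_re,
      Complex.ofReal_im, Complex.I_re, Complex.I_im, Complex.add_im, Complex.mul_im,
      Complex.zero_re, Complex.zero_im] at hz
    have h0 := hunit t
    nlinarith [hz.1, hz.2]
  -- key identity : F (c t) = - st t * (ψ t)^2
  have hkey : ∀ t, F (c t) = -((st t : ℝ) : ℂ) * (ψ t) ^ 2 := by
    intro t
    have heq := heig t
    have eq0 := congrFun heq 0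
    have eq1 := congrFun heq 1
    simp only [Matrix.mulVec, dotProduct, Fin.sum_univ_two, Pi.smul_apply,
      smul_eq_mul] at eq0 eq1
    have hl : 2 * lowEig (A (c t)) = Matrix.trace (A (c t)) - st t := by
      rw [lowEig, hstdef]; ring
    rw [Matrix.trace_fin_two] at hl
    have hsy' := hsy (c t) (hcD t)
    set x := φ t 0
    set y := φ t 1
    set M := A (c t)
    have hu := hunit t
    have e1 : (M 0 0 - M 1 1) * x + (2 * M 0 1) * y = -(st t) * x := by
      linear_combination 2 * eq0 + x * hl
    have e2 : (2 * M 0 1) * x - (M 0 0 - M 1 1) * y = -(st t) * y := by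
      linear_combination 2 * eq1 + y * hl - 2 * x * hsy'
    have hp : M 0 0 - M 1 1 = -(st t) * (x ^ 2 - y ^ 2) := by
      linear_combination x * e1 - y * e2 - (M 0 0 - M 1 1) * hu
    have hq : 2 * M 0 1 = -(st t) * (2 * x * y) := by
      linear_combination y * e1 + x * e2 - (2 * M 0 1) * hu
    rw [hFdef, hψdef]
    simp only [Complex.ext_iff, Complex.add_re, Complex.add_im, Complex.mul_re,
      Complex.mul_im, Complex.ofReal_re, Complex.ofReal_im, Complex.I_re, Complex.I_im,
      Complex.neg_re, Complex.neg_im, pow_two]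
    constructor <;> simp <;> nlinarith [hp, hq]
  -- the square root of the gap
  set w : ℝ → ℝ := fun t => Real.sqrt (st t) with hwdef
  have hwpos : ∀ t, 0 < w t := fun t => Real.sqrt_pos.2 (hstpos t)
  have hwsq : ∀ t, w t ^ 2 = st t := fun t => Real.sq_sqrt (hstpos t).le
  have hwcont : Continuous w := Real.continuous_sqrt.comp hstcont
  -- the sign function
  set U : ℝ → ℂ := fun t => G (c t) / (((w t : ℝ) : ℂ) * Complex.I * ψ t) with hUdef
  have hden : ∀ t, (((w t : ℝ) : ℂ) * Complex.I * ψ t) ≠ 0 := by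
    intro t
    apply mul_ne_zero (mul_ne_zero ?_ Complex.I_ne_zero) (hψne t)
    exact_mod_cast (hwpos t).ne'
  have hUcont : Continuous U := by
    apply Continuous.div
    · exact hGcont.comp_continuous hcc hcD
    · exact ((Complex.continuous_ofReal.comp hwcont).mul continuous_const).mul hψcont
    · exact hden
  have hU2 : ∀ t, U t ^ 2 = 1 := by
    intro t
    rw [hUdef]
    simp only
    rw [div_pow, hGsq (c t) (hcD t), hkey t]
    have hd2 : (((w t : ℝ) : ℂ) * Complex.I * ψ t) ^ 2 = -((st t : ℝ) : ℂ) * (ψ t) ^ 2 := by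
      have : (((w t : ℝ) : ℂ)) ^ 2 = ((st t : ℝ) : ℂ) := by
        rw [← Complex.ofReal_pow, hwsq t]
      rw [mul_pow, mul_pow, Complex.I_sq, this]; ring
    rw [hd2]
    apply div_self
    apply mul_ne_zero
    · simp only [neg_ne_zero, Ne, Complex.ofReal_eq_zero]
      exact (hstpos t).ne'
    · exact pow_ne_zero 2 (hψne t)
  have hUval : ∀ t, U t = 1 ∨ U t = -1 := by
    intro t
    have : (U t - 1) * (U t + 1) = 0 := by linear_combination hU2 t
    rcases mul_eq_zero.1 this with h | h
    · left; exact sub_eq_zero.1 h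
    · right; exact eq_neg_of_add_eq_zero_left h
  -- endpoints
  have hc10 : c 1 = c 0 := by
    rw [hcdef]
    simp [mul_one, mul_zero, Real.cos_two_pi, Real.sin_two_pi, Real.cos_zero, Real.sin_zero]
  have hψ10 : ψ 1 = -ψ 0 := by
    rw [hψdef]
    have h0 : φ 1 0 = -(φ 0 0) := by rw [hflip]; simp
    have h1 : φ 1 1 = -(φ 0 1) := by rw [hflip]; simp
    simp only [h0, h1]
    push_cast
    ring
  have hU10 : U 1 = -U 0 := by
    rw [hUdef]
    simp only
    rw [hc10, hψ10]
    have hw10 : w 1 = w 0 := by rw [hwdef]; simp only [hstdef, hc10]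
    rw [hw10, mul_neg, div_neg]
  -- intermediate value contradiction
  set r : ℝ → ℝ := fun t => (U t).re with hrdef
  have hrcont : Continuous r := Complex.continuous_re.comp hUcont
  have hrval : ∀ t, r t = 1 ∨ r t = -1 := by
    intro t
    rcases hUval t with h | h
    · left; rw [hrdef]; simp [h]
    · right; rw [hrdef]; simp [h]
  have hr10 : r 1 = -r 0 := by rw [hrdef]; simp [hU10]
  have hzero : ∃ t ∈ Icc (0:ℝ) 1, r t = 0 := by
    rcases hrval 0 with h0 | h0
    · have h1 : r 1 = -1 := by rw [hr10, h0]
      have : (0:ℝ) ∈ Icc (r 1) (r 0) := by rw [h0, h1]; norm_num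
      obtain ⟨t, ht, htv⟩ := intermediate_value_Icc' zero_le_one hrcont.continuousOn this
      exact ⟨t, ht, htv⟩
    · have h1 : r 1 = 1 := by rw [hr10, h0]; norm_num
      have : (0:ℝ) ∈ Icc (r 0) (r 1) := by rw [h0, h1]; norm_num
      obtain ⟨t, ht, htv⟩ := intermediate_value_Icc zero_le_one hrcont.continuousOn this
      exact ⟨t, ht, htv⟩
  obtain ⟨t, _, htv⟩ := hzero
  rcases hrval t with h | h <;> rw [htv] at h <;> norm_num at h
end

section
/- Let E be a finite-dimensional real inner product space and A, B self-adjoint operators on E. Then for each i, the i-th eigenvalues (in nondecreasing order, with multiplicity) satisfy |λ_i(A) − λ_i(B)| ≤ ‖A − B‖, where ‖·‖ is the operator norm. Consequently the eigenvalues of a continuous family of self-adjoint operators depend continuously on the parameter. -/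
open scoped RealInnerProductSpace

/-- The `i`-th eigenvalue (nondecreasing, with multiplicity) of a self-adjoint operator,
defined by the Courant–Fischer min-max principle. -/
noncomputable def ithEig {E : Type*} [NormedAddCommGroup E] [InnerProductSpace ℝ E]
    (A : E →L[ℝ] E) (i : ℕ) : ℝ :=
  sInf {m : ℝ | ∃ V : Submodule ℝ E, Module.finrank ℝ V = i + 1 ∧
    m = sSup {r : ℝ | ∃ x ∈ V, ‖x‖ = 1 ∧ r = ⟪A x, x⟫}}

section Aux

variable {E : Type*} [NormedAddCommGroup E] [InnerProductSpace ℝ E]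

/-- The Rayleigh-quotient value set over a subspace. -/
def raySet (A : E →L[ℝ] E) (V : Submodule ℝ E) : Set ℝ :=
  {r : ℝ | ∃ x ∈ V, ‖x‖ = 1 ∧ r = ⟪A x, x⟫}

lemma raySet_nonempty (A : E →L[ℝ] E) {V : Submodule ℝ E} {i : ℕ}
    (hV : Module.finrank ℝ V = i + 1) : (raySet A V).Nonempty := by
  have : V ≠ ⊥ := by
    intro h
    rw [h] at hV
    simp at hV
  obtain ⟨x, hxV, hx0⟩ := Submodule.exists_mem_ne_zero_of_ne_bot this
  refine ⟨⟪A ((‖x‖)⁻¹ • x), (‖x‖)⁻¹ • x⟫, (‖x‖)⁻¹ • x, V.smul_mem _ hxV, ?_, rfl⟩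
  rw [norm_smul, norm_inv, norm_norm, inv_mul_cancel₀ (norm_ne_zero_iff.mpr hx0)]

lemma raySet_bddAbove (A : E →L[ℝ] E) (V : Submodule ℝ E) :
    BddAbove (raySet A V) := by
  refine ⟨‖A‖, fun r hr => ?_⟩
  obtain ⟨x, -, hx1, rfl⟩ := hr
  calc ⟪A x, x⟫ ≤ ‖A x‖ * ‖x‖ := real_inner_le_norm _ _
    _ ≤ ‖A‖ * ‖x‖ * ‖x‖ := by
        have := A.le_opNorm x
        nlinarith [norm_nonneg x]
    _ = ‖A‖ := by rw [hx1]; ring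

lemma abs_ray_le (A : E →L[ℝ] E) {x : E} (hx : ‖x‖ = 1) : |⟪A x, x⟫| ≤ ‖A‖ := by
  calc |⟪A x, x⟫| ≤ ‖A x‖ * ‖x‖ := abs_real_inner_le_norm _ _
    _ ≤ ‖A‖ * ‖x‖ * ‖x‖ := by
        have := A.le_opNorm x
        nlinarith [norm_nonneg x]
    _ = ‖A‖ := by rw [hx]; ring

/-- One-sided Weyl bound. -/
lemma ithEig_le (A B : E →L[ℝ] E) {i : ℕ} [FiniteDimensional ℝ E]
    (hi : i < Module.finrank ℝ E) : ithEig A i ≤ ithEig B i + ‖A - B‖ := by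
  set MA := {m : ℝ | ∃ V : Submodule ℝ E, Module.finrank ℝ V = i + 1 ∧
    m = sSup (raySet A V)} with hMA
  set MB := {m : ℝ | ∃ V : Submodule ℝ E, Module.finrank ℝ V = i + 1 ∧
    m = sSup (raySet B V)} with hMB
  have hMAlb : ∀ m ∈ MA, -‖A‖ ≤ m := by
    rintro m ⟨V, hV, rfl⟩
    obtain ⟨r, hr⟩ := raySet_nonempty A hV
    refine le_trans ?_ (le_csSup (raySet_bddAbove A V) hr)
    obtain ⟨x, -, hx1, rfl⟩ := hr
    have := abs_ray_le A hx1
    linarith [neg_abs_le (⟪A x, x⟫ : ℝ)]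
  have hMBne : MB.Nonempty := by
    -- construct a subspace of finrank i+1
    have h1 : i + 1 ≤ Module.finrank ℝ E := hi
    set b := Module.finBasis ℝ E with hb
    set f : Fin (i+1) → E := fun j => b (Fin.castLE h1 j) with hf
    have hli : LinearIndependent ℝ f :=
      b.linearIndependent.comp _ (Fin.castLE_injective h1)
    refine ⟨sSup (raySet B (Submodule.span ℝ (Set.range f))),
      Submodule.span ℝ (Set.range f), ?_, rfl⟩
    rw [finrank_span_eq_card hli]
    simp
  have key : ∀ m ∈ MB, ithEig A i ≤ m + ‖A - B‖ := by
    rintro m ⟨V, hV, rfl⟩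
    have h1 : ithEig A i ≤ sSup (raySet A V) := by
      apply csInf_le ⟨-‖A‖, hMAlb⟩
      exact ⟨V, hV, rfl⟩
    refine h1.trans ?_
    apply csSup_le (raySet_nonempty A hV)
    rintro r ⟨x, hxV, hx1, rfl⟩
    have h2 : ⟪B x, x⟫ ≤ sSup (raySet B V) :=
      le_csSup (raySet_bddAbove B V) ⟨x, hxV, hx1, rfl⟩
    have h3 : ⟪A x, x⟫ - ⟪B x, x⟫ ≤ ‖A - B‖ := by
      have h4 : ⟪A x, x⟫ - ⟪B x, x⟫ = ⟪(A - B) x, x⟫ := by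
        simp [inner_sub_left]
      rw [h4]
      exact (le_abs_self _).trans (abs_ray_le (A - B) hx1)
    linarith
  have : ithEig A i - ‖A - B‖ ≤ sInf MB := by
    apply le_csInf hMBne
    intro m hm
    linarith [key m hm]
  have hIB : ithEig B i = sInf MB := rfl
  linarith [hIB ▸ this]

end Aux

/-- Weyl's inequality: the ordered eigenvalues of self-adjoint operators on a
finite-dimensional real inner product space are 1-Lipschitz in the operator norm;
consequently eigenvalues of a continuous family of self-adjoint operators depend
continuously on the parameter. -/
theorem eigenvalues_lipschitz_in_operator_norm
    {E : Type*} [NormedAddCommGroup E] [InnerProductSpace ℝ E] [FiniteDimensional ℝ E]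
    (A B : E →L[ℝ] E)
    (hA : ∀ x y : E, ⟪A x, y⟫ = ⟪x, A y⟫) (hB : ∀ x y : E, ⟪B x, y⟫ = ⟪x, B y⟫) :
    (∀ i : ℕ, i < Module.finrank ℝ E → |ithEig A i - ithEig B i| ≤ ‖A - B‖) ∧
    (∀ (F : ℝ → E →L[ℝ] E), Continuous F →
      (∀ (t : ℝ) (x y : E), ⟪F t x, y⟫ = ⟪x, F t y⟫) →
      ∀ i : ℕ, i < Module.finrank ℝ E → Continuous fun t => ithEig (F t) i) := by
  have lip : ∀ (A B : E →L[ℝ] E) (i : ℕ), i < Module.finrank ℝ E →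
      |ithEig A i - ithEig B i| ≤ ‖A - B‖ := by
    intro A B i hi
    rw [abs_sub_le_iff]
    constructor
    · linarith [ithEig_le A B hi]
    · have := ithEig_le B A hi
      rw [norm_sub_rev] at this
      linarith
  refine ⟨fun i hi => lip A B i hi, ?_⟩
  intro F hF hFsa i hi
  rw [Metric.continuous_iff]
  intro t ε hε
  rw [Metric.continuous_iff] at hF
  obtain ⟨δ, hδ, hd⟩ := hF t ε hε
  refine ⟨δ, hδ, fun s hs => ?_⟩
  have := lip (F s) (F t) i hi
  have h2 : ‖F s - F t‖ = dist (F s) (F t) := (dist_eq_norm _ _).symm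
  calc dist (ithEig (F s) i) (ithEig (F t) i) = |ithEig (F s) i - ithEig (F t) i| :=
        Real.dist_eq _ _
    _ ≤ ‖F s - F t‖ := this
    _ < ε := h2 ▸ hd s hs
end

section
/- Let E be a 2-dimensional real inner product space with orthonormal basis (ω₁, ω₂), and let A be a self-adjoint operator on E with distinct eigenvalues μ₁ < μ₂ and unit eigenvector φ₁ for μ₁. If μ₁ is close to a and μ₂ is close to b with a < b, and ‖A − A₀‖ < ε where A₀ has eigenvalues a, b with eigenvector ω₁ for a, then ‖φ₁ − ω₁‖ or ‖φ₁ + ω₁‖ is at most Cε/(b − a − 2ε) for a universal constant C (eigenvector perturbation bound). -/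
/-!
Pairing `(A - A₀) φ₁` with `ω₂` and using that `A₀` is self-adjoint gives
`⟪(A - A₀) φ₁, ω₂⟫ = (μ₁ - b) ⟪φ₁, ω₂⟫`. Since `μ₁` stays within `ε` of `a`, it is at distance
at least `b - a - ε` from `b`, so the `ω₂`-component of `φ₁` is at most `ε / (b - a - 2ε)`.
In dimension two this component controls the distance from `φ₁` to the line through `ω₁`:
for unit vectors `‖φ ∓ ω‖² = 2 - 2|⟪φ, ω⟫| ≤ 2 (1 - ⟪φ, ω⟫²)`, and `1 - ⟪φ₁, ω₁⟫² = ⟪φ₁, ω₂⟫²`.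
-/

open scoped RealInnerProductSpace

section

variable {E : Type*} [NormedAddCommGroup E] [InnerProductSpace ℝ E]

theorem inner_sq_add_inner_sq_eq_norm_sq (hE : Module.finrank ℝ E = 2) {ω₁ ω₂ : E}
    (hω : Orthonormal ℝ ![ω₁, ω₂]) (x : E) :
    ⟪x, ω₁⟫ ^ 2 + ⟪x, ω₂⟫ ^ 2 = ‖x‖ ^ 2 := by
  let b := (basisOfOrthonormalOfCardEqFinrank hω (by simp [hE])).toOrthonormalBasis
    (by rwa [coe_basisOfOrthonormalOfCardEqFinrank])
  have hb : ⇑b = ![ω₁, ω₂] := by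
    simp [b, coe_basisOfOrthonormalOfCardEqFinrank]
  simpa [hb] using b.sum_sq_inner_left x

theorem norm_sub_sq_le_or_norm_add_sq_le {φ ω : E} (hφ : ‖φ‖ = 1) (hω : ‖ω‖ = 1) :
    ‖φ - ω‖ ^ 2 ≤ 2 * (1 - ⟪φ, ω⟫ ^ 2) ∨ ‖φ + ω‖ ^ 2 ≤ 2 * (1 - ⟪φ, ω⟫ ^ 2) := by
  have hle : |⟪φ, ω⟫| ≤ 1 := by simpa [hω, hφ] using abs_real_inner_le_norm φ ω
  rw [norm_sub_sq_real, norm_add_sq_real, hω, hφ]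
  rcases le_total 0 ⟪φ, ω⟫ with h | h
  · left
    rw [abs_of_nonneg h] at hle
    nlinarith
  · right
    rw [abs_of_nonpos h] at hle
    nlinarith

theorem inner_sub_apply_of_eigenvector {A B : E →L[ℝ] E} (hB : ∀ x y, ⟪B x, y⟫ = ⟪x, B y⟫)
    {μ b : ℝ} {φ ω : E} (hφ : A φ = μ • φ) (hω : B ω = b • ω) :
    ⟪(A - B) φ, ω⟫ = (μ - b) * ⟪φ, ω⟫ := by
  rw [sub_apply, inner_sub_left, hB, hφ, hω, real_inner_smul_left,
    real_inner_smul_right, sub_mul]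

theorem abs_sub_mul_abs_inner_le_of_eigenvector {A B : E →L[ℝ] E}
    (hB : ∀ x y, ⟪B x, y⟫ = ⟪x, B y⟫) {μ b : ℝ} {φ ω : E} (hφ : A φ = μ • φ)
    (hω : B ω = b • ω) :
    |μ - b| * |⟪φ, ω⟫| ≤ ‖A - B‖ * ‖φ‖ * ‖ω‖ := by
  rw [← abs_mul, ← inner_sub_apply_of_eigenvector hB hφ hω]
  exact (abs_real_inner_le_norm _ _).trans
    (mul_le_mul_of_nonneg_right ((A - B).le_opNorm φ) (norm_nonneg ω))

end

/-- Eigenvector perturbation (Davis–Kahan type) bound: there is a universal constant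
`C` such that on any 2-dimensional real inner product space with orthonormal basis
`(ω₁, ω₂)`, if `A₀` is self-adjoint with eigenvalues `a < b` and eigenvectors `ω₁, ω₂`,
and `A` is self-adjoint with eigenvalues `μ₁ < μ₂` close to `a, b` and unit eigenvector
`φ₁` for `μ₁`, and `‖A − A₀‖ < ε` with `2ε < b − a`, then `φ₁` is within
`Cε/(b − a − 2ε)` of `ω₁` or of `−ω₁`. -/
theorem eigenvector_perturbation_bound :
    ∃ C : ℝ, 0 < C ∧
      ∀ (E : Type) [NormedAddCommGroup E] [InnerProductSpace ℝ E],
        Module.finrank ℝ E = 2 →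
        ∀ (ω₁ ω₂ : E), ‖ω₁‖ = 1 → ‖ω₂‖ = 1 → ⟪ω₁, ω₂⟫ = 0 →
        ∀ (A A₀ : E →L[ℝ] E),
          (∀ x y : E, ⟪A x, y⟫ = ⟪x, A y⟫) →
          (∀ x y : E, ⟪A₀ x, y⟫ = ⟪x, A₀ y⟫) →
        ∀ (a b μ₁ μ₂ ε : ℝ) (φ₁ : E),
          a < b → 0 < ε → 2 * ε < b - a →
          A₀ ω₁ = a • ω₁ → A₀ ω₂ = b • ω₂ →
          μ₁ < μ₂ → Module.End.HasEigenvalue (A : E →ₗ[ℝ] E) μ₂ →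
          ‖φ₁‖ = 1 → A φ₁ = μ₁ • φ₁ →
          |μ₁ - a| ≤ ε → |μ₂ - b| ≤ ε →
          ‖A - A₀‖ < ε →
          (‖φ₁ - ω₁‖ ≤ C * ε / (b - a - 2 * ε) ∨
            ‖φ₁ + ω₁‖ ≤ C * ε / (b - a - 2 * ε)) := by
  refine ⟨2, two_pos, ?_⟩
  intro E _ _ hE ω₁ ω₂ hω₁ hω₂ hω₁₂ A A₀ _ hA₀ a b μ₁ _ ε φ₁ _ _ hgap _ hA₀ω₂ _ _ hφ₁ hAφ₁
    hμ₁ _ hAA₀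
  have hd : 0 < b - a - 2 * ε := by linarith
  have hsep : b - a - 2 * ε ≤ |μ₁ - b| := by
    rw [abs_sub_comm]
    exact le_abs.mpr (Or.inl (by linarith [(abs_le.mp hμ₁).2]))
  have hcomp : |μ₁ - b| * |⟪φ₁, ω₂⟫| ≤ ε := by
    have := abs_sub_mul_abs_inner_le_of_eigenvector hA₀ hAφ₁ hA₀ω₂
    rw [hφ₁, hω₂, mul_one, mul_one] at this
    exact this.trans hAA₀.le
  have hy : |⟪φ₁, ω₂⟫| ≤ ε / (b - a - 2 * ε) := by
    rw [le_div_iff₀' hd]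
    exact (mul_le_mul_of_nonneg_right hsep (abs_nonneg _)).trans hcomp
  have hperp : 1 - ⟪φ₁, ω₁⟫ ^ 2 = ⟪φ₁, ω₂⟫ ^ 2 := by
    have hω : Orthonormal ℝ ![ω₁, ω₂] := by simp [hω₁, hω₂, hω₁₂]
    have := inner_sq_add_inner_sq_eq_norm_sq hE hω φ₁
    rw [hφ₁] at this
    linarith
  have hbound : ∀ v : E, ‖v‖ ^ 2 ≤ 2 * (1 - ⟪φ₁, ω₁⟫ ^ 2) → ‖v‖ ≤ 2 * ε / (b - a - 2 * ε) := by
    intro v hv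
    have hsq : ‖v‖ ^ 2 ≤ (2 * |⟪φ₁, ω₂⟫|) ^ 2 := by
      rw [hperp] at hv
      rw [mul_pow, sq_abs]
      linarith [sq_nonneg ⟪φ₁, ω₂⟫]
    calc ‖v‖ ≤ 2 * |⟪φ₁, ω₂⟫| := (pow_le_pow_iff_left₀ (norm_nonneg v) (by positivity)
          two_ne_zero).mp hsq
      _ ≤ 2 * ε / (b - a - 2 * ε) := by rw [mul_div_assoc]; gcongr
  exact (norm_sub_sq_le_or_norm_add_sq_le hφ₁ hω₁).imp (hbound _) (hbound _)
end
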